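/- arXiv:2406.15762 — 2 statements merged into one kernel-verified Lean document; each statement's English description precedes it below -/
import Mathlib

section
/- Fix D ∈ ℕ, λ ∈ ℝ, and τ₀ ∈ ℝ. Let r : ℝ × ℝ^D → ℝ be C¹ with r(τ, ·) strictly positive for every τ, let u : ℝ × ℝ^D → ℝ^D be C¹ such that there is a compact set K ⊆ ℝ^D with u(τ, x) = 0 for all τ and all x ∉ K, and let p̂ : ℝ^D → ℝ be C¹ and strictly positive. Assume the continuity equation ∂r/∂τ(τ, x) = −div_x( r(τ, ·)·u(τ, ·) )(x) holds for all (τ, x); assume for each τ in a neighborhood of τ₀ that x ↦ r(τ,x)·(log p̂(x) + λ·log r(τ,x)) is Lebesgue integrable and that its pointwise τ-derivative is dominated, uniformly for τ near τ₀, by a fixed integrable function of x; and assume x ↦ r(τ₀,x)·(⟨u(τ₀,x), ∇ log p̂(x)⟩ − λ·div_x u(τ₀, x)) is integrable. Then F(τ) := ∫_{ℝ^D} r(τ,x)·(log p̂(x) + λ·log r(τ,x)) dx is differentiable at τ₀ with F′(τ₀) = ∫_{ℝ^D} r(τ₀,x)·( ⟨u(τ₀,x), ∇ log p̂(x)⟩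 − λ·div_x u(τ₀,x) ) dx. -/
open MeasureTheory Real RealInnerProductSpace

/-- Divergence of a vector field on `ℝ^D`: the trace of its Fréchet derivative,
written as a sum of partial derivatives of coordinates. -/
noncomputable def divg {D : ℕ}
    (F : EuclideanSpace ℝ (Fin D) → EuclideanSpace ℝ (Fin D))
    (x : EuclideanSpace ℝ (Fin D)) : ℝ :=
  ∑ i, fderiv ℝ F x (EuclideanSpace.single i 1) i

/-!
Differentiating under the integral sign (the domination hypothesis) gives
`F'(τ₀) = ∫ ∂_τ r · (log p̂ + λ log r + λ)`. The continuity equation `∂_τ r = -div (r u)` and two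
applications of the product rule for `div` turn this integrand into
`r (⟪u, ∇ log p̂⟫ - λ div u) - div ((log p̂ + λ log r) r u)`.
The last field is `C¹` with compact support, so its divergence integrates to zero.
-/

open Filter Topology

section CompactSupport

variable {E F : Type*} [NormedAddCommGroup E] [NormedSpace ℝ E] [MeasurableSpace E]
  [BorelSpace E] {μ : Measure E} [NormedAddCommGroup F] [NormedSpace ℝ F] {g : E → F}

theorem ContDiff.integrable_fderiv_apply [IsFiniteMeasureOnCompacts μ] (hg : ContDiff ℝ 1 g)
    (hgc : HasCompactSupport g) (v : E) : Integrable (fun x => fderiv ℝ g x v) μ :=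
  ((hg.continuous_fderiv one_ne_zero).clm_apply continuous_const).integrable_of_hasCompactSupport
    (hgc.fderiv_apply ℝ v)

-- Integration by parts against the constant function `1`.
theorem integral_fderiv_apply_eq_zero [FiniteDimensional ℝ E] [μ.IsAddHaarMeasure]
    (hg : ContDiff ℝ 1 g) (hgc : HasCompactSupport g) (v : E) :
    ∫ x, fderiv ℝ g x v ∂μ = 0 := by
  have h := integral_smul_fderiv_eq_neg_fderiv_smul_of_integrable (μ := μ)
    (f := fun _ => (1 : ℝ)) (g := g) (v := v) (by simp)
    (by simpa using hg.integrable_fderiv_apply hgc v)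
    (by simpa using hg.continuous.integrable_of_hasCompactSupport hgc)
    (fun _ _ => differentiableAt_const _) (fun x _ => hg.differentiable one_ne_zero x)
  simpa using h

end CompactSupport

section Divergence

variable {D : ℕ}

local notation "ℝᴰ" => EuclideanSpace ℝ (Fin D)

theorem ContinuousLinearMap.apply_eq_sum_smul_apply_single {M : Type*} [AddCommGroup M]
    [Module ℝ M] [TopologicalSpace M] (L : ℝᴰ →L[ℝ] M) (v : ℝᴰ) :
    L v = ∑ i, v i • L (EuclideanSpace.single i 1) := by
  conv_lhs => rw [← (EuclideanSpace.basisFun (Fin D) ℝ).sum_repr v]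
  simp only [EuclideanSpace.basisFun_repr, EuclideanSpace.basisFun_apply, map_sum, map_smul]

theorem integrable_divg {F : ℝᴰ → ℝᴰ} (hF : ContDiff ℝ 1 F) (hc : HasCompactSupport F) :
    Integrable (divg F) :=
  integrable_finsetSum _ fun i _ =>
    (EuclideanSpace.proj (𝕜 := ℝ) i).integrable_comp (hF.integrable_fderiv_apply hc _)

theorem integral_divg_eq_zero {F : ℝᴰ → ℝᴰ} (hF : ContDiff ℝ 1 F) (hc : HasCompactSupport F) :
    ∫ x, divg F x = 0 := by
  have hint i := hF.integrable_fderiv_apply (μ := volume) hc (EuclideanSpace.single i 1)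
  have hcoord i : Integrable fun x => fderiv ℝ F x (EuclideanSpace.single i 1) i :=
    (EuclideanSpace.proj (𝕜 := ℝ) i).integrable_comp (hint i)
  unfold divg
  rw [integral_finsetSum _ fun i _ => hcoord i]
  refine Finset.sum_eq_zero fun i _ => ?_
  have := (EuclideanSpace.proj (𝕜 := ℝ) i).integral_comp_comm (hint i)
  rwa [integral_fderiv_apply_eq_zero hF hc, map_zero] at this

theorem divg_smul {c : ℝᴰ → ℝ} {V : ℝᴰ → ℝᴰ} {x : ℝᴰ} (hc : DifferentiableAt ℝ c x)
    (hV : DifferentiableAt ℝ V x) :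
    divg (fun y => c y • V y) x = c x * divg V x + fderiv ℝ c x (V x) := by
  simp only [divg, fderiv_fun_smul hc hV, (fderiv ℝ c x).apply_eq_sum_smul_apply_single (V x),
    smul_eq_mul, Finset.mul_sum, ← Finset.sum_add_distrib]
  refine Finset.sum_congr rfl fun i _ => ?_
  simp only [add_apply, smul_apply, ContinuousLinearMap.smulRight_apply, PiLp.add_apply,
    PiLp.smul_apply, smul_eq_mul]
  ring

theorem neg_divg_smul_mul_log_add_log_eq (lam : ℝ) {R P : ℝᴰ → ℝ} {U : ℝᴰ → ℝᴰ} {x : ℝᴰ}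
    (hR : DifferentiableAt ℝ R x) (hP : DifferentiableAt ℝ P x) (hU : DifferentiableAt ℝ U x)
    (hRx : R x ≠ 0) (hPx : P x ≠ 0) :
    -divg (fun y => R y • U y) x * (log (P x) + lam * log (R x) + lam)
      = R x * (⟪U x, gradient (fun y => log (P y)) x⟫ - lam * divg U x)
        - divg (fun y => ((log (P y) + lam * log (R y)) * R y) • U y) x := by
  have hlogP : HasFDerivAt (fun y => log (P y)) ((P x)⁻¹ • fderiv ℝ P x) x :=
    (hasDerivAt_log hPx).comp_hasFDerivAt x hP.hasFDerivAt
  have hlogR : HasFDerivAt (fun y => log (R y)) ((R x)⁻¹ • fderiv ℝ R x) x :=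
    (hasDerivAt_log hRx).comp_hasFDerivAt x hR.hasFDerivAt
  have hpot : HasFDerivAt (fun y => (log (P y) + lam * log (R y)) * R y) _ x :=
    (hlogP.add (hlogR.const_mul lam)).mul hR.hasFDerivAt
  rw [divg_smul hR hU, divg_smul hpot.differentiableAt hU, hpot.fderiv, inner_gradient_right,
    hlogP.fderiv]
  simp only [add_apply, smul_apply, Pi.add_apply, smul_eq_mul, conj_trivial]
  field_simp
  ring

end Divergence

theorem HasDerivAt.mul_add_mul_log {f : ℝ → ℝ} {f' t : ℝ} (hf : HasDerivAt f f' t) (ht : f t ≠ 0)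
    (a lam : ℝ) :
    HasDerivAt (fun s => f s * (a + lam * Real.log (f s)))
      (f' * (a + lam * Real.log (f t) + lam)) t := by
  have h : HasDerivAt (fun s => f s * (a + lam * Real.log (f s))) _ t :=
    hf.mul (((hf.log ht).const_mul lam).const_add a)
  convert h using 1
  field_simp

theorem hasDerivAt_integral_of_abs_deriv_le {α : Type*} [MeasurableSpace α] {μ : Measure α}
    {G : ℝ → α → ℝ} {τ₀ : ℝ} {bound : α → ℝ}
    (hdiff : ∀ᶠ t in 𝓝 τ₀, ∀ x, DifferentiableAt ℝ (fun s => G s x) t)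
    (hint : ∀ᶠ t in 𝓝 τ₀, Integrable (G t) μ)
    (hmeas : AEStronglyMeasurable (fun x => deriv (fun t => G t x) τ₀) μ)
    (hbound : Integrable bound μ)
    (hdom : ∀ᶠ t in 𝓝 τ₀, ∀ x, |deriv (fun s => G s x) t| ≤ bound x) :
    HasDerivAt (fun t => ∫ x, G t x ∂μ) (∫ x, deriv (fun t => G t x) τ₀ ∂μ) τ₀ := by
  obtain ⟨ε, hε, hball⟩ := Metric.eventually_nhds_iff_ball.mp (hdiff.and hdom)
  exact (hasDerivAt_integral_of_dominated_loc_of_deriv_le (Metric.ball_mem_nhds τ₀ hε)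
    (hint.mono fun t ht => ht.aestronglyMeasurable) hint.self_of_nhds hmeas
    (ae_of_all _ fun x t ht => (hball t ht).2 x) hbound
    (ae_of_all _ fun x t ht => ((hball t ht).1 x).hasDerivAt)).2

/-- Proposition 2 of the paper: along the continuity equation
`∂r/∂τ = −div(r u)` with compactly supported `u`, the NER cost functional
`F(τ) = ∫ r(τ,x) (log phat(x) + λ log r(τ,x)) dx` is differentiable at `τ₀` with
`F'(τ₀) = ∫ r(τ₀,x) (⟪u, ∇log phat⟫ − λ div u) dx`. -/
theorem stmt_4 {D : ℕ} (lam τ₀ : ℝ)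
    (r : ℝ × EuclideanSpace ℝ (Fin D) → ℝ) (hr : ContDiff ℝ 1 r)
    (hrpos : ∀ τ x, 0 < r (τ, x))
    (u : ℝ × EuclideanSpace ℝ (Fin D) → EuclideanSpace ℝ (Fin D)) (hu : ContDiff ℝ 1 u)
    (K : Set (EuclideanSpace ℝ (Fin D))) (hK : IsCompact K)
    (husupp : ∀ τ x, x ∉ K → u (τ, x) = 0)
    (phat : EuclideanSpace ℝ (Fin D) → ℝ) (hp : ContDiff ℝ 1 phat) (hppos : ∀ x, 0 < phat x)
    (hcont : ∀ τ x, deriv (fun t => r (t, x)) τ = - divg (fun y => r (τ, y) • u (τ, y)) x)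
    (hint : ∀ᶠ τ in nhds τ₀,
      Integrable fun x => r (τ, x) * (log (phat x) + lam * log (r (τ, x))))
    (bound : EuclideanSpace ℝ (Fin D) → ℝ) (hbound : Integrable bound)
    (hdom : ∀ᶠ τ in nhds τ₀, ∀ x,
      |deriv (fun t => r (t, x) * (log (phat x) + lam * log (r (t, x)))) τ| ≤ bound x)
    (hint0 : Integrable fun x => r (τ₀, x) *
      (⟪u (τ₀, x), gradient (fun y => log (phat y)) x⟫
        - lam * divg (fun y => u (τ₀, y)) x)) :
    HasDerivAt (fun τ => ∫ x, r (τ, x) * (log (phat x) + lam * log (r (τ, x))))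
      (∫ x, r (τ₀, x) *
        (⟪u (τ₀, x), gradient (fun y => log (phat y)) x⟫
          - lam * divg (fun y => u (τ₀, y)) x)) τ₀ := by
  have hslice t x : HasDerivAt (fun s => r (s, x)) (deriv (fun s => r (s, x)) t) t :=
    ((hr.differentiable one_ne_zero _).comp t
      (differentiableAt_id.prodMk (differentiableAt_const x))).hasDerivAt
  have hR : ContDiff ℝ 1 fun y => r (τ₀, y) := hr.comp (contDiff_const.prodMk contDiff_id)
  have hU : ContDiff ℝ 1 fun y => u (τ₀, y) := hu.comp (contDiff_const.prodMk contDiff_id)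
  set W := fun y => ((log (phat y) + lam * log (r (τ₀, y))) * r (τ₀, y)) • u (τ₀, y)
  have hW : ContDiff ℝ 1 W :=
    (((hp.log fun y => (hppos y).ne').add
      (contDiff_const.mul (hR.log fun y => (hrpos τ₀ y).ne'))).mul hR).smul hU
  have hWc : HasCompactSupport W :=
    HasCompactSupport.intro hK fun y hy => by simp [W, husupp τ₀ y hy]
  have hderiv x : deriv (fun t => r (t, x) * (log (phat x) + lam * log (r (t, x)))) τ₀
      = r (τ₀, x) * (⟪u (τ₀, x), gradient (fun y => log (phat y)) x⟫
          - lam * divg (fun y => u (τ₀, y)) x) - divg W x := by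
    rw [((hslice τ₀ x).mul_add_mul_log (hrpos τ₀ x).ne' _ lam).deriv, hcont]
    exact neg_divg_smul_mul_log_add_log_eq lam (hR.differentiable one_ne_zero x)
      (hp.differentiable one_ne_zero x) (hU.differentiable one_ne_zero x) (hrpos τ₀ x).ne'
      (hppos x).ne'
  have hF := hasDerivAt_integral_of_abs_deriv_le
    (Eventually.of_forall fun t x =>
      ((hslice t x).mul_add_mul_log (hrpos t x).ne' _ lam).differentiableAt) hint
    ((hint0.sub (integrable_divg hW hWc)).aestronglyMeasurable.congr
      (ae_of_all _ fun x => (hderiv x).symm))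
    hbound hdom
  rwa [integral_congr_ae (ae_of_all _ hderiv), integral_sub hint0 (integrable_divg hW hWc),
    integral_divg_eq_zero hW hWc, sub_zero] at hF
end

section
/- Fix D ∈ ℕ. Let k : ℝ^D × ℝ^D → ℝ be continuous and positive semidefinite in the finite-sum sense: for every N ∈ ℕ, every x₁,…,x_N ∈ ℝ^D and every c₁,…,c_N ∈ ℝ, ∑_{i,j} c_i·c_j·k(x_i, x_j) ≥ 0. Let μ be a finite Borel measure on ℝ^D with compact support and let g : ℝ^D → ℝ^D be continuous. Then ∬ k(x, y)·⟪g(x), g(y)⟫ dμ(x) dμ(y) ≥ 0. -/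
/-!
Let `φₙ` be simple functions with values in `K` converging pointwise to the identity on `K`
(`SimpleFunc.approxOn`). Against `μ ⊗ μ`, the function `k (φₙ x, φₙ y)` integrates to the finite
quadratic form `∑ c_z c_w k (z, w)` with weights `c_z = μ (φₙ⁻¹ {z})`, which is nonnegative, and
dominated convergence (`k` is bounded on `K ×ˢ K`) passes to the limit. The vector field is
absorbed into the kernel: in an orthonormal basis `⟪g x, g y⟫ = ∑ d, ⟪g x, b d⟫ * ⟪g y, b d⟫`,
so `k (x, y) * ⟪g x, g y⟫` is a sum of positive semidefinite kernels.
-/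

open MeasureTheory RealInnerProductSpace Filter Topology

namespace MeasureTheory.SimpleFunc

variable {α β : Type*} [MeasurableSpace α]

theorem integral_comp_eq_sum {E : Type*} [NormedAddCommGroup E] [NormedSpace ℝ E]
    [CompleteSpace E] {μ : Measure α} [IsFiniteMeasure μ] (φ : SimpleFunc α β) (f : β → E) :
    ∫ a, f (φ a) ∂μ = ∑ b ∈ φ.range, μ.real (φ ⁻¹' {b}) • f b := by
  have hfiber (a : α) : f (φ a) = ∑ b ∈ φ.range, (φ ⁻¹' {b}).indicator (fun _ => f b) a := by
    rw [Finset.sum_eq_single_of_mem (φ a) (φ.mem_range_self a)]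
    · simp
    · exact fun b _ hb => Set.indicator_of_notMem (Ne.symm hb) _
  simp_rw [hfiber]
  rw [integral_finsetSum _ fun b _ =>
    (integrable_const (f b)).indicator (φ.measurableSet_preimage _)]
  exact Finset.sum_congr rfl fun b _ => integral_indicator_const _ (φ.measurableSet_preimage _)

def prodMap {γ δ : Type*} [MeasurableSpace β] (φ : SimpleFunc α γ) (ψ : SimpleFunc β δ) :
    SimpleFunc (α × β) (γ × δ) :=
  (φ.comp Prod.fst measurable_fst).pair (ψ.comp Prod.snd measurable_snd)

end MeasureTheory.SimpleFunc

def IsPosSemidefKernel {X : Type*} (k : X × X → ℝ) : Prop :=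
  ∀ (N : ℕ) (x : Fin N → X) (c : Fin N → ℝ), 0 ≤ ∑ i, ∑ j, c i * c j * k (x i, x j)

namespace IsPosSemidefKernel

variable {X : Type*} {k : X × X → ℝ}

theorem sum_sum_nonneg (hk : IsPosSemidefKernel k) {ι : Type*} (s : Finset ι) (x : ι → X)
    (c : ι → ℝ) : 0 ≤ ∑ i ∈ s, ∑ j ∈ s, c i * c j * k (x i, x j) := by
  let e := s.equivFin.symm
  calc 0 ≤ ∑ i, ∑ j, c (e i) * c (e j) * k (x (e i), x (e j)) := hk _ _ _
    _ = ∑ i : s, ∑ j : s, c i * c j * k (x i, x j) :=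
        Fintype.sum_equiv e _ _ fun _ => Fintype.sum_equiv e _ _ fun _ => rfl
    _ = ∑ i ∈ s, ∑ j ∈ s, c i * c j * k (x i, x j) := by
        rw [← Finset.sum_coe_sort s]
        exact Finset.sum_congr rfl fun i _ =>
          Finset.sum_coe_sort s fun j => c i * c j * k (x i, x j)

theorem mul_inner {F : Type*} [NormedAddCommGroup F] [InnerProductSpace ℝ F]
    [FiniteDimensional ℝ F] (hk : IsPosSemidefKernel k) (g : X → F) :
    IsPosSemidefKernel fun p => k p * ⟪g p.1, g p.2⟫ := by
  intro N x c
  let b := stdOrthonormalBasis ℝ F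
  have hexpand (i j : Fin N) : c i * c j * (k (x i, x j) * ⟪g (x i), g (x j)⟫) =
      ∑ d, (c i * ⟪g (x i), b d⟫) * (c j * ⟪g (x j), b d⟫) * k (x i, x j) := by
    rw [← b.sum_inner_mul_inner, Finset.mul_sum, Finset.mul_sum]
    exact Finset.sum_congr rfl fun d _ => by rw [real_inner_comm _ (b d)]; ring
  calc 0 ≤ ∑ d, ∑ i, ∑ j, (c i * ⟪g (x i), b d⟫) * (c j * ⟪g (x j), b d⟫) * k (x i, x j) :=
        Finset.sum_nonneg fun d _ => hk N x fun i => c i * ⟪g (x i), b d⟫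
    _ = ∑ i, ∑ j, ∑ d, (c i * ⟪g (x i), b d⟫) * (c j * ⟪g (x j), b d⟫) * k (x i, x j) := by
        rw [Finset.sum_comm]
        exact Finset.sum_congr rfl fun i _ => Finset.sum_comm
    _ = _ := by simp_rw [hexpand]

variable [MeasurableSpace X]

theorem integral_comp_prodMap_nonneg (hk : IsPosSemidefKernel k) (μ : Measure X)
    [IsFiniteMeasure μ] (φ : SimpleFunc X X) : 0 ≤ ∫ p, k (φ p.1, φ p.2) ∂μ.prod μ := by
  rw [integral_prod (fun p => k (φ p.1, φ p.2))
    ((φ.prodMap φ).map k).integrable_of_isFiniteMeasure]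
  set m : X → ℝ := fun z => μ.real (φ ⁻¹' {z})
  have hinner (x : X) : ∫ y, k (φ x, φ y) ∂μ = ∑ w ∈ φ.range, m w * k (φ x, w) :=
    φ.integral_comp_eq_sum fun w => k (φ x, w)
  have houter : ∫ x, ∑ w ∈ φ.range, m w * k (φ x, w) ∂μ =
      ∑ z ∈ φ.range, ∑ w ∈ φ.range, m z * m w * k (z, w) := by
    rw [φ.integral_comp_eq_sum fun z => ∑ w ∈ φ.range, m w * k (z, w)]
    simp_rw [smul_eq_mul, Finset.mul_sum, mul_assoc]
    rfl
  rw [integral_congr_ae (ae_of_all _ hinner), houter]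
  exact hk.sum_sum_nonneg φ.range id m

theorem integral_integral_nonneg [PseudoEMetricSpace X] [OpensMeasurableSpace X]
    (hk : IsPosSemidefKernel k) {K : Set X} (hK : IsCompact K) (hkK : ContinuousOn k (K ×ˢ K))
    (μ : Measure X) [IsFiniteMeasure μ] (hμK : μ Kᶜ = 0) :
    0 ≤ ∫ x, ∫ y, k (x, y) ∂μ ∂μ := by
  rcases K.eq_empty_or_nonempty with rfl | ⟨y₀, hy₀⟩
  · simp [Measure.measure_univ_eq_zero.mp (by simpa using hμK)]
  have : TopologicalSpace.SeparableSpace K := hK.isSeparable.separableSpace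
  let φ := SimpleFunc.approxOn id measurable_id K y₀ hy₀
  have hφK (n : ℕ) (x : X) : φ n x ∈ K := SimpleFunc.approxOn_mem measurable_id hy₀ n x
  have hφ {x : X} (hx : x ∈ K) : Tendsto (φ · x) atTop (𝓝 x) :=
    SimpleFunc.tendsto_approxOn measurable_id hy₀ (subset_closure hx)
  obtain ⟨M, hM⟩ := (hK.prod hK).exists_bound_of_continuousOn hkK
  have hKK : ∀ᵐ p ∂μ.prod μ, p ∈ K ×ˢ K := Measure.measure_prod_compl_eq_zero hμK hμK
  have hmeas (n : ℕ) : AEStronglyMeasurable (fun p => k (φ n p.1, φ n p.2)) (μ.prod μ) :=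
    (((φ n).prodMap (φ n)).map k).aestronglyMeasurable
  have hlim : ∀ᵐ p ∂μ.prod μ, Tendsto (fun n => k (φ n p.1, φ n p.2)) atTop (𝓝 (k p)) :=
    hKK.mono fun p hp => (hkK p hp).tendsto.comp <| tendsto_nhdsWithin_iff.2
      ⟨(hφ hp.1).prodMk_nhds (hφ hp.2), Eventually.of_forall fun n => ⟨hφK n _, hφK n _⟩⟩
  have hint : Integrable k (μ.prod μ) :=
    .of_bound (aestronglyMeasurable_of_tendsto_ae _ hmeas hlim) M (hKK.mono hM)
  rw [← integral_prod _ hint]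
  exact ge_of_tendsto' (tendsto_integral_of_dominated_convergence (fun _ => M) hmeas
    (integrable_const M) (fun n => ae_of_all _ fun p => hM _ ⟨hφK n _, hφK n _⟩) hlim)
    fun n => hk.integral_comp_prodMap_nonneg μ (φ n)

end IsPosSemidefKernel

/-- if `k` is a continuous kernel on `ℝ^D` that is positive
semidefinite in the finite-sum sense, `μ` a finite Borel measure with compact
support and `g` a continuous vector field, then
`∬ k(x,y) ⟪g x, g y⟫ dμ(x) dμ(y) ≥ 0`. -/
theorem stmt_8 {D : ℕ}
    (k : EuclideanSpace ℝ (Fin D) × EuclideanSpace ℝ (Fin D) → ℝ)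
    (hkc : Continuous k)
    (hk : ∀ (N : ℕ) (x : Fin N → EuclideanSpace ℝ (Fin D)) (c : Fin N → ℝ),
      0 ≤ ∑ i, ∑ j, c i * c j * k (x i, x j))
    (μ : Measure (EuclideanSpace ℝ (Fin D))) [IsFiniteMeasure μ]
    (K : Set (EuclideanSpace ℝ (Fin D))) (hK : IsCompact K) (hμK : μ Kᶜ = 0)
    (g : EuclideanSpace ℝ (Fin D) → EuclideanSpace ℝ (Fin D)) (hg : Continuous g) :
    0 ≤ ∫ x, ∫ y, k (x, y) * ⟪g x, g y⟫ ∂μ ∂μ := by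
  have hkg : Continuous fun p : EuclideanSpace ℝ (Fin D) × EuclideanSpace ℝ (Fin D) =>
      k p * ⟪g p.1, g p.2⟫ :=
    hkc.mul ((hg.comp continuous_fst).inner (hg.comp continuous_snd))
  exact (IsPosSemidefKernel.mul_inner hk g).integral_integral_nonneg hK hkg.continuousOn μ hμK
end
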